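/- arXiv:2602.24225 — 4 statements merged into one kernel-verified Lean document; each statement's English description precedes it below -/
import Mathlib

section
/- Let K ≥ 1 and R > 0. Define Δ₊^{K-1} = {α ∈ ℝ^K : α_i ≥ 0, Σα_i = 1, and α_i - (2^R - 1)β_i ≥ 0 for all i, where β_i = Σ_{j>i} α_j}, and S_K = {x ∈ ℝ^K : x_j ≥ 0 for all j and Σ_{i=1}^K (2^R)^{i-1} x_i = 1}. Then the map M_B : Δ₊^{K-1} → S_K defined by (M_B(α))_i = α_i - (2^R - 1)β_i is a bijection, with inverse given by α_i = x_i + (2^R - 1) Σ_{j=i+1}^K 2^{R(j-i-1)} x_j. -/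
/-!
Write `c = 2 ^ R` and `x = M_B(α)`. Dropping the first coordinate commutes with `M_B`
(`x_0 = α_0 - (c - 1) Σ_{j>0} α_j`, and the remaining coordinates of `x` are `M_B` of the tail
of `α`), so induction on `K` gives `Σ_i c^i x_i = Σ_i α_i`; applied to the coordinates after `i`
it gives `β_i = Σ_{j>i} c^(j-i-1) x_j`, which is the inverse formula. Hence the linear map `M_B`
on `ℝ^K` is injective, so bijective. As `c ≥ 1`, the inverse formula gives `α ≥ 0` whenever
`x ≥ 0`, and with the first identity `Δ₊` is exactly the preimage of `S_K`.
-/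

open Finset

/-- Residual power β_i = Σ_{j>i} α_j. -/
noncomputable def resid {K : ℕ} (α : Fin K → ℝ) (i : Fin K) : ℝ :=
  ∑ j ∈ Finset.Ioi i, α j

/-- Δ₊^{K-1}: nonnegative power splits summing to 1 with α_i - (2^R-1)β_i ≥ 0. -/
noncomputable def DeltaPlus (K : ℕ) (R : ℝ) : Set (Fin K → ℝ) :=
  {α | (∀ i, 0 ≤ α i) ∧ (∑ i, α i = 1) ∧
    ∀ i, 0 ≤ α i - ((2:ℝ) ^ R - 1) * resid α i}

/-- S_K: nonnegative vectors with Σ (2^R)^{i-1} x_i = 1 (0-indexed exponent i). -/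
noncomputable def SK (K : ℕ) (R : ℝ) : Set (Fin K → ℝ) :=
  {x | (∀ j, 0 ≤ x j) ∧ ∑ i : Fin K, ((2:ℝ) ^ R) ^ (i : ℕ) * x i = 1}

/-- The map M_B(α)_i = α_i - (2^R - 1) β_i. -/
noncomputable def MB {K : ℕ} (R : ℝ) (α : Fin K → ℝ) : Fin K → ℝ :=
  fun i => α i - ((2:ℝ) ^ R - 1) * resid α i

lemma resid_zero {K : ℕ} (α : Fin (K + 1) → ℝ) : resid α 0 = ∑ i, Fin.tail α i :=
  Fin.sum_Ioi_zero α

lemma resid_succ {K : ℕ} (α : Fin (K + 1) → ℝ) (i : Fin K) :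
    resid α i.succ = resid (Fin.tail α) i :=
  Fin.sum_Ioi_succ α i

lemma MB_succ {K : ℕ} (R : ℝ) (α : Fin (K + 1) → ℝ) (i : Fin K) :
    MB R α i.succ = MB R (Fin.tail α) i := by
  simp only [MB, resid_succ, Fin.tail]

lemma sum_pow_mul_MB {K : ℕ} (R : ℝ) (α : Fin K → ℝ) :
    ∑ i : Fin K, ((2:ℝ) ^ R) ^ (i : ℕ) * MB R α i = ∑ i, α i := by
  induction K with
  | zero => simp
  | succ K ih =>
    simp only [Fin.sum_univ_succ, Fin.val_zero, Fin.val_succ, pow_zero, one_mul, pow_succ',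
      MB_succ, mul_assoc, ← mul_sum, ih]
    rw [MB, resid_zero]
    simp only [Fin.tail]
    ring

lemma resid_eq_sum_pow_mul_MB {K : ℕ} (R : ℝ) (α : Fin K → ℝ) (i : Fin K) :
    resid α i = ∑ j ∈ Ioi i, ((2:ℝ) ^ R) ^ ((j : ℕ) - i - 1) * MB R α j := by
  induction K with
  | zero => exact i.elim0
  | succ K ih =>
    cases i using Fin.cases with
    | zero =>
      simp only [Fin.sum_Ioi_zero, resid_zero, MB_succ, Fin.val_succ, Fin.val_zero,
        add_tsub_cancel_right, tsub_zero]
      exact (sum_pow_mul_MB R (Fin.tail α)).symm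
    | succ i =>
      simp only [Fin.sum_Ioi_succ, resid_succ, MB_succ, Fin.val_succ, Nat.add_sub_add_right, ih]

lemma eq_MB_add_sum_pow_mul_MB {K : ℕ} (R : ℝ) (α : Fin K → ℝ) (i : Fin K) :
    α i = MB R α i +
      ((2:ℝ) ^ R - 1) * ∑ j ∈ Ioi i, ((2:ℝ) ^ R) ^ ((j : ℕ) - i - 1) * MB R α j := by
  rw [← resid_eq_sum_pow_mul_MB, MB]
  ring

noncomputable def linearMB {K : ℕ} (R : ℝ) : (Fin K → ℝ) →ₗ[ℝ] (Fin K → ℝ) where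
  toFun := MB R
  map_add' α β := by
    ext i
    simp only [MB, resid, Pi.add_apply, sum_add_distrib]
    ring
  map_smul' a α := by
    ext i
    simp only [MB, resid, Pi.smul_apply, smul_eq_mul, ← mul_sum, RingHom.id_apply]
    ring

lemma MB_injective {K : ℕ} (R : ℝ) : Function.Injective (MB (K := K) R) := fun α β h ↦
  funext fun i ↦ by rw [eq_MB_add_sum_pow_mul_MB R α i, eq_MB_add_sum_pow_mul_MB R β i, h]

lemma MB_bijective {K : ℕ} (R : ℝ) : Function.Bijective (MB (K := K) R) :=
  ⟨MB_injective R, (LinearMap.injective_iff_surjective (f := linearMB R)).mp (MB_injective R)⟩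

lemma nonneg_of_MB_nonneg {K : ℕ} {R : ℝ} (hR : 0 ≤ R) {α : Fin K → ℝ}
    (h : ∀ i, 0 ≤ MB R α i) (i : Fin K) : 0 ≤ α i := by
  have hc : 1 ≤ (2:ℝ) ^ R := Real.one_le_rpow (by norm_num) hR
  rw [eq_MB_add_sum_pow_mul_MB R α i]
  exact add_nonneg (h i) (mul_nonneg (sub_nonneg.2 hc) (sum_nonneg fun j _ ↦
    mul_nonneg (pow_nonneg (by positivity) _) (h j)))

lemma MB_mem_SK_iff {K : ℕ} {R : ℝ} (hR : 0 ≤ R) {α : Fin K → ℝ} :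
    MB R α ∈ SK K R ↔ α ∈ DeltaPlus K R := by
  simp only [SK, DeltaPlus, Set.mem_ofPred_eq, sum_pow_mul_MB]
  exact ⟨fun ⟨hx, hs⟩ ↦ ⟨nonneg_of_MB_nonneg hR hx, hs, hx⟩, fun ⟨_, hs, hx⟩ ↦ ⟨hx, hs⟩⟩

theorem MB_bijection_general (K : ℕ) (R : ℝ) (hR : 0 < R) :
    Set.BijOn (MB R) (DeltaPlus K R) (SK K R) ∧
    ∀ α ∈ DeltaPlus K R, ∀ i : Fin K,
      α i = MB R α i +
        ((2:ℝ) ^ R - 1) *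
          ∑ j ∈ Finset.Ioi i, ((2:ℝ) ^ R) ^ ((j : ℕ) - (i : ℕ) - 1) * MB R α j := by
  have hpre : DeltaPlus K R = MB R ⁻¹' SK K R := Set.ext fun _ ↦ (MB_mem_SK_iff hR.le).symm
  exact ⟨hpre ▸ (MB_bijective R).bijOn_preimage, fun α _ i ↦ eq_MB_add_sum_pow_mul_MB R α i⟩

/-- M_B is a bijection from Δ₊^{K-1} to S_K with the stated inverse formula. -/
theorem MB_bijection (K : ℕ) (hK : 1 ≤ K) (R : ℝ) (hR : 0 < R) :
    Set.BijOn (MB R) (DeltaPlus K R) (SK K R) ∧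
    ∀ α ∈ DeltaPlus K R, ∀ i : Fin K,
      α i = MB R α i +
        ((2:ℝ) ^ R - 1) *
          ∑ j ∈ Finset.Ioi i, ((2:ℝ) ^ R) ^ ((j : ℕ) - (i : ℕ) - 1) * MB R α j :=
  MB_bijection_general K R hR
end

section
/- Let θ > 0, R > 0, and 0 < x < y with 2^R·y²/x² < exp(θ(1/x - 1/y)). Then θ·(1 + 2^R·y²/x²) - 2^{R+1}·y²/x - 2y > 0. -/
lemma log_gt_tanh {u : ℝ} (hu : 1 < u) : 2 * (u - 1) / (u + 1) < Real.log u := by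
  have key : StrictMonoOn (fun v : ℝ => Real.log v - 2 * (v - 1) / (v + 1)) (Set.Ici 1) := by
    apply strictMonoOn_of_deriv_pos (convex_Ici 1)
    · apply ContinuousOn.sub
      · exact Real.continuousOn_log.mono (by intro v hv; simp at hv ⊢; linarith)
      · apply ContinuousOn.div (by fun_prop) (by fun_prop)
        intro v hv; simp at hv; intro hc; linarith
    · intro v hv
      rw [interior_Ici] at hv
      simp only [Set.mem_Ioi] at hv
      have hv0 : (0:ℝ) < v := by linarith
      have h1 : HasDerivAt Real.log (1 / v) v := by
        simpa [one_div] using Real.hasDerivAt_log (ne_of_gt hv0)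
      have h2 : HasDerivAt (fun v : ℝ => 2 * (v - 1) / (v + 1))
          ((2 * (v + 1) - 2 * (v - 1) * 1) / (v + 1) ^ 2) v := by
        have hf : HasDerivAt (fun v : ℝ => 2 * (v - 1)) 2 v := by
          simpa using ((hasDerivAt_id v).sub_const 1).const_mul 2
        have hg : HasDerivAt (fun v : ℝ => v + 1) 1 v := (hasDerivAt_id v).add_const 1
        exact hf.div hg (by intro hc; linarith)
      have hd : HasDerivAt (fun v : ℝ => Real.log v - 2 * (v - 1) / (v + 1))
          (1 / v - (2 * (v + 1) - 2 * (v - 1) * 1) / (v + 1) ^ 2) v := h1.sub h2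
      rw [hd.deriv]
      have hv1 : (0:ℝ) < (v + 1) ^ 2 := by positivity
      rw [sub_pos, div_lt_div_iff₀ hv1 hv0]
      nlinarith [sq_nonneg (v - 1)]
  have h1 : (1:ℝ) ∈ Set.Ici (1:ℝ) := Set.mem_Ici.2 le_rfl
  have h2 : u ∈ Set.Ici (1:ℝ) := Set.mem_Ici.2 hu.le
  have := key h1 h2 hu
  simp only [Real.log_one] at this
  norm_num at this
  linarith

/-- If 0 < x < y, R > 0, θ > 0 and 2^R y²/x² < exp(θ(1/x - 1/y)), then
θ(1 + 2^R y²/x²) - 2^{R+1} y²/x - 2y > 0. -/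
theorem second_derivative_positive (x y θ R : ℝ) (hx : 0 < x) (hxy : x < y)
    (hR : 0 < R) (hθ : 0 < θ)
    (h : (2:ℝ) ^ R * y ^ 2 / x ^ 2 < Real.exp (θ * (1 / x - 1 / y))) :
    θ * (1 + (2:ℝ) ^ R * y ^ 2 / x ^ 2) - (2:ℝ) ^ (R + 1) * y ^ 2 / x - 2 * y > 0 := by
  have hy : 0 < y := hx.trans hxy
  set A : ℝ := (2:ℝ) ^ R * y ^ 2 / x ^ 2 with hAdef
  have h2R : (1:ℝ) < (2:ℝ) ^ R := Real.one_lt_rpow_iff_of_pos (by norm_num) |>.2 (Or.inl ⟨by norm_num, hR⟩)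
  have hyx : 1 < y ^ 2 / x ^ 2 := by
    rw [one_lt_div (by positivity)]
    nlinarith
  have hA1 : 1 < A := by
    have : y ^ 2 / x ^ 2 ≤ A := by
      rw [hAdef, div_le_div_iff₀ (by positivity) (by positivity)]
      nlinarith [mul_pos (pow_pos hy 2) (pow_pos hx 2)]
    linarith
  have hAx2 : y ^ 2 ≤ A * x ^ 2 := by
    have : A * x ^ 2 = (2:ℝ) ^ R * y ^ 2 := by
      rw [hAdef]; field_simp
    nlinarith
  have hlog : Real.log A < θ * (1 / x - 1 / y) := by
    have := Real.log_lt_log (by positivity) h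
    rwa [Real.log_exp] at this
  have htanh : 2 * (A - 1) / (A + 1) < Real.log A := log_gt_tanh hA1
  have h2 : 2 * (A - 1) / (A + 1) < θ * (1 / x - 1 / y) := htanh.trans hlog
  have hA1' : (0:ℝ) < A + 1 := by linarith
  rw [div_lt_iff₀ hA1'] at h2
  -- h2 : 2 * (A - 1) < θ * (1/x - 1/y) * (A + 1)
  have hfrac : 1 / x - 1 / y = (y - x) / (x * y) := by
    field_simp
  rw [hfrac] at h2
  have h3 : 2 * (A - 1) * (x * y) < θ * (y - x) * (A + 1) := by
    have hxy0 : (0:ℝ) < x * y := by positivity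
    have := mul_lt_mul_of_pos_right h2 hxy0
    calc 2 * (A - 1) * (x * y) < θ * ((y - x) / (x * y)) * (A + 1) * (x * y) := this
      _ = θ * (y - x) * (A + 1) := by field_simp
  have hpow : (2:ℝ) ^ (R + 1) = 2 * (2:ℝ) ^ R := by
    rw [Real.rpow_add (by norm_num), Real.rpow_one]; ring
  have hkey : θ * (1 + A) > 2 * A * x + 2 * y := by
    have hyx' : 0 < y - x := by linarith
    nlinarith [h3, hAx2]
  have heq : (2:ℝ) ^ (R + 1) * y ^ 2 / x = 2 * A * x := by
    rw [hpow, hAdef]; field_simp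
  rw [heq]
  linarith
end

section
/- For every R > 0 and every t ∈ (0, 2^{R/2}), the function F(t) = (1/t²)·exp( (2t/(t² + 2^R))·(t + 2^R - 1 - 2^R/t) ) satisfies F(t) ≥ 1, with equality attained at t = 1. -/
open Real Set

/-- Padé bound: for `t ≥ 1`, `2 t log t ≤ t² - 1`. -/
lemma pade_upper {t : ℝ} (ht : 1 ≤ t) : 2 * t * Real.log t ≤ t ^ 2 - 1 := by
  have ht0 : 0 < t := lt_of_lt_of_le one_pos ht
  set u := Real.log t with hu
  have hexp : Real.exp u = t := Real.exp_log ht0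
  have hu0 : 0 ≤ u := Real.log_nonneg ht
  have hsinh : u ≤ Real.sinh u := Real.self_le_sinh_iff.2 hu0
  have h2 : 2 * Real.sinh u = Real.exp u - Real.exp (-u) := by
    rw [Real.sinh_eq]; ring
  have hinv : Real.exp (-u) = 1 / t := by
    rw [Real.exp_neg, hexp, one_div]
  have : 2 * u ≤ t - 1 / t := by
    have := mul_le_mul_of_nonneg_left hsinh (by norm_num : (0:ℝ) ≤ 2)
    rw [h2, hexp, hinv] at this
    linarith
  have htne : t ≠ 0 := ht0.ne'
  calc 2 * t * u = t * (2 * u) := by ring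
    _ ≤ t * (t - 1 / t) := mul_le_mul_of_nonneg_left this ht0.le
    _ = t ^ 2 - 1 := by field_simp

/-- For `0 < t ≤ 1`, `(t+1) log t ≤ 2 (t - 1)`. -/
lemma log_upper_small {t : ℝ} (ht0 : 0 < t) (ht1 : t ≤ 1) :
    (t + 1) * Real.log t ≤ 2 * (t - 1) := by
  set G : ℝ → ℝ := fun x => 2 * (x - 1) - (x + 1) * Real.log x with hG
  have hderiv : ∀ x ∈ interior (Set.Ioc (0:ℝ) 1), HasDerivAt G (1 - 1/x - Real.log x) x := by
    intro x hx
    rw [interior_Ioc] at hx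
    have hx0 : 0 < x := hx.1
    have h1 : HasDerivAt (fun y : ℝ => 2 * (y - 1)) 2 x := by
      simpa using ((hasDerivAt_id x).sub_const 1).const_mul 2
    have h2 : HasDerivAt (fun y : ℝ => (y + 1) * Real.log y)
        (1 * Real.log x + (x + 1) * x⁻¹) x := by
      exact ((hasDerivAt_id x).add_const 1).mul (Real.hasDerivAt_log hx0.ne')
    have := h1.sub h2
    refine this.congr_deriv ?_
    field_simp
    ring
  have hanti : AntitoneOn G (Set.Ioc (0:ℝ) 1) := by
    apply antitoneOn_of_deriv_nonpos (convex_Ioc 0 1)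
    · apply ContinuousOn.sub (by fun_prop)
      apply ContinuousOn.mul (by fun_prop)
      apply Real.continuousOn_log.mono
      intro x hx
      exact ne_of_gt hx.1
    · intro x hx
      exact (hderiv x hx).differentiableAt.differentiableWithinAt
    · intro x hx
      rw [(hderiv x hx).deriv]
      rw [interior_Ioc] at hx
      have hx0 : 0 < x := hx.1
      have hlog : 1 - 1/x ≤ Real.log x := by
        have := Real.log_le_sub_one_of_pos (show (0:ℝ) < 1/x by positivity)
        rw [Real.log_div one_ne_zero hx0.ne', Real.log_one] at this
        have hxne : x ≠ 0 := hx0.ne'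
        linarith
      linarith
  have hmem : t ∈ Set.Ioc (0:ℝ) 1 := ⟨ht0, ht1⟩
  have h1mem : (1:ℝ) ∈ Set.Ioc (0:ℝ) 1 := by norm_num
  have := hanti hmem h1mem ht1
  simp [hG, Real.log_one] at this
  linarith

/-- For every R > 0 and t ∈ (0, 2^{R/2}),
F(t) = (1/t²) exp((2t/(t² + 2^R))(t + 2^R - 1 - 2^R/t)) ≥ 1, with equality at t = 1. -/
theorem F_ge_one (R : ℝ) (hR : 0 < R) :
    (∀ t : ℝ, 0 < t → t < (2:ℝ) ^ (R / 2) →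
      (1 / t ^ 2) *
        Real.exp ((2 * t / (t ^ 2 + (2:ℝ) ^ R)) *
          (t + (2:ℝ) ^ R - 1 - (2:ℝ) ^ R / t)) ≥ 1) ∧
    (1 / (1:ℝ) ^ 2) *
        Real.exp ((2 * 1 / ((1:ℝ) ^ 2 + (2:ℝ) ^ R)) *
          (1 + (2:ℝ) ^ R - 1 - (2:ℝ) ^ R / 1)) = 1 := by
  set A : ℝ := (2:ℝ) ^ R with hA
  have hA1 : 1 < A := Real.one_lt_rpow_iff_of_pos (by norm_num) |>.2 (Or.inl ⟨by norm_num, hR⟩)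
  have hA0 : 0 < A := lt_trans one_pos hA1
  constructor
  · intro t ht0 htlt
    have htsq : t ^ 2 < A := by
      have h := sq_lt_sq' (by linarith [Real.rpow_pos_of_pos (show (0:ℝ) < 2 by norm_num) (R/2)] : -((2:ℝ)^(R/2)) < t) htlt
      calc t ^ 2 < ((2:ℝ) ^ (R/2)) ^ 2 := h
        _ = A := by
          rw [← Real.rpow_natCast ((2:ℝ)^(R/2)) 2, ← Real.rpow_mul (by norm_num : (0:ℝ) ≤ 2)]
          norm_num
          exact hA.symm
    have hden : 0 < t ^ 2 + A := by positivity
    -- the exponent equals 2(t-1)(t+A)/(t²+A)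
    have hexpr : (2 * t / (t ^ 2 + A)) * (t + A - 1 - A / t)
        = 2 * (t - 1) * (t + A) / (t ^ 2 + A) := by
      field_simp
      ring
    -- key inequality: 2 log t ≤ 2(t-1)(t+A)/(t²+A)
    have hkey : 2 * Real.log t ≤ 2 * (t - 1) * (t + A) / (t ^ 2 + A) := by
      rw [le_div_iff₀ hden]
      rcases le_total 1 t with h1 | h1
      · have hp := pade_upper h1
        -- 2 t log t ≤ t² - 1, so 2 log t ≤ (t²-1)/t
        have h2 : 2 * Real.log t * t ≤ t ^ 2 - 1 := by linarith [hp]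
        -- (t²-1)(t²+A) ≤ 2t(t-1)(t+A) since (t-1)²(t²-A) ≤ 0
        nlinarith [sq_nonneg (t - 1), mul_nonneg (sq_nonneg (t-1)) (le_of_lt (sub_pos.2 htsq)), sq_nonneg t, mul_pos ht0 hden]
      · have hp := log_upper_small ht0 h1
        -- (t+1) log t ≤ 2(t-1)
        nlinarith [mul_nonneg (sq_nonneg (t-1)) (le_of_lt (sub_pos.2 (lt_of_le_of_lt h1 hA1))), mul_pos ht0 (show (0:ℝ) < t + 1 by linarith)]
    rw [hexpr, ge_iff_le]
    have hexpge : t ^ 2 ≤ Real.exp (2 * (t - 1) * (t + A) / (t ^ 2 + A)) := by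
      calc t ^ 2 = Real.exp (Real.log (t ^ 2)) := (Real.exp_log (by positivity)).symm
        _ ≤ Real.exp (2 * (t - 1) * (t + A) / (t ^ 2 + A)) := by
            apply Real.exp_le_exp.2
            rw [Real.log_pow, Nat.cast_ofNat]
            exact hkey
    calc (1:ℝ) = 1 / t ^ 2 * t ^ 2 := by field_simp
      _ ≤ 1 / t ^ 2 * Real.exp (2 * (t - 1) * (t + A) / (t ^ 2 + A)) :=
          mul_le_mul_of_nonneg_left hexpge (by positivity)
  · have h0 : (1:ℝ) + A - 1 - A / 1 = 0 := by field_simp; ring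
    rw [h0, mul_zero, Real.exp_zero]
    norm_num
end

section
/- Let R > 0 and 0 < θ < 2^{-R/2}. Set q₋ = 1/θ - √(1/θ² - 2^R). Then for any r ∈ (0,1), h(q₋) ≥ 2^R/r > 1, where h(q) = (2^R/(r q²))·exp(θ(q + 2^R - 1 - 2^R/q)). -/
open Real Set

/-- For R > 0, 0 < θ < 2^{-R/2}, r ∈ (0,1) and q₋ = 1/θ - √(1/θ² - 2^R),
we have h(q₋) ≥ 2^R/r > 1. -/
theorem h_at_qminus_ge (R θ r : ℝ) (hR : 0 < R) (hθ0 : 0 < θ)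
    (hθ : θ < (2:ℝ) ^ (-R / 2)) (hr0 : 0 < r) (hr1 : r < 1) :
    ((2:ℝ) ^ R / (r * (1 / θ - Real.sqrt (1 / θ ^ 2 - (2:ℝ) ^ R)) ^ 2) *
      Real.exp (θ * ((1 / θ - Real.sqrt (1 / θ ^ 2 - (2:ℝ) ^ R)) + (2:ℝ) ^ R - 1
        - (2:ℝ) ^ R / (1 / θ - Real.sqrt (1 / θ ^ 2 - (2:ℝ) ^ R))))
      ≥ (2:ℝ) ^ R / r) ∧ (2:ℝ) ^ R / r > 1 := by
  set C : ℝ := (2:ℝ) ^ R with hCdef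
  have hC1 : 1 < C := by
    rw [hCdef]
    exact Real.one_lt_rpow_iff_of_pos (by norm_num) |>.2 (Or.inl ⟨by norm_num, hR⟩)
  have hC0 : 0 < C := by linarith
  -- θ² < 1/C
  have hθ2 : θ ^ 2 < 1 / C := by
    have h1 : θ ^ 2 < ((2:ℝ) ^ (-R / 2)) ^ 2 := by
      have := Real.rpow_pos_of_pos (by norm_num : (0:ℝ) < 2) (-R / 2)
      nlinarith
    have h2 : ((2:ℝ) ^ (-R / 2)) ^ 2 = 1 / C := by
      rw [hCdef, ← Real.rpow_natCast ((2:ℝ) ^ (-R/2)) 2, ← Real.rpow_mul (by norm_num)]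
      rw [one_div, ← Real.rpow_neg (by norm_num)]
      norm_num
    linarith
  have hθ1 : θ < 1 := by
    have h1 : 1 / C < 1 := by rw [div_lt_one hC0]; exact hC1
    nlinarith
  have hCθ : C < 1 / θ ^ 2 := by
    have hθ2pos : 0 < θ ^ 2 := by positivity
    rw [lt_div_iff₀ hθ2pos]
    calc C * θ ^ 2 < C * (1 / C) := by
          exact mul_lt_mul_of_pos_left hθ2 hC0
      _ = 1 := by field_simp
  set u : ℝ := Real.sqrt (1 / θ ^ 2 - C) with hudef
  have hu0 : 0 < u := Real.sqrt_pos.2 (by linarith)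
  have hu2 : u ^ 2 = 1 / θ ^ 2 - C := Real.sq_sqrt (by linarith)
  have huθ : u < 1 / θ := by
    have h1 : (1:ℝ) / θ = Real.sqrt ((1 / θ) ^ 2) := (Real.sqrt_sq (by positivity)).symm
    rw [hudef, h1]
    apply Real.sqrt_lt_sqrt (by linarith)
    have : (1 / θ) ^ 2 = 1 / θ ^ 2 := by field_simp
    linarith
  set q : ℝ := 1 / θ - u with hqdef
  set Q : ℝ := 1 / θ + u with hQdef
  have hq0 : 0 < q := by rw [hqdef]; linarith
  have hqQ : q * Q = C := by
    rw [hqdef, hQdef]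
    have h2 : (1 / θ) ^ 2 = 1 / θ ^ 2 := by rw [div_pow]; norm_num
    nlinarith
  have hsum : θ * (q + Q) = 2 := by
    rw [hqdef, hQdef]
    field_simp
    ring
  have hQ1 : 1 < Q := by
    have : 1 < 1 / θ := by rw [lt_div_iff₀ hθ0]; linarith
    rw [hQdef]; linarith
  have hqltQ : q < Q := by rw [hqdef, hQdef]; linarith
  -- the function g
  set g : ℝ → ℝ := fun x => θ * (x + C - 1 - C / x) - 2 * Real.log x with hgdef
  have hderiv : ∀ x : ℝ, 0 < x → HasDerivAt g (θ * (x - q) * (x - Q) / x ^ 2) x := by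
    intro x hx
    have h2 : HasDerivAt (fun y : ℝ => y + C - 1 - C * y⁻¹)
        (1 - C * (-(x ^ 2)⁻¹)) x :=
      (((hasDerivAt_id x).add_const C).sub_const 1).sub
        ((hasDerivAt_inv hx.ne').const_mul C)
    have h3 := h2.const_mul θ
    have h4 := (Real.hasDerivAt_log hx.ne').const_mul 2
    have h5 := h3.sub h4
    have heq : θ * (1 - C * (-(x ^ 2)⁻¹)) - 2 * x⁻¹ = θ * (x - q) * (x - Q) / x ^ 2 := by
      have hexp : θ * (x - q) * (x - Q) = θ * x ^ 2 - 2 * x + θ * C := by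
        have : θ * (x - q) * (x - Q)
            = θ * x ^ 2 - (θ * (q + Q)) * x + θ * (q * Q) := by ring
        rw [this, hsum, hqQ]
      rw [hexp]
      field_simp
      ring
    have h6 : HasDerivAt (fun y : ℝ => θ * (y + C - 1 - C * y⁻¹) - 2 * Real.log y)
        (θ * (x - q) * (x - Q) / x ^ 2) x := heq ▸ h5
    have : (fun y : ℝ => θ * (y + C - 1 - C * y⁻¹) - 2 * Real.log y) = g := by
      rw [hgdef]; funext y; rw [div_eq_mul_inv]
    rwa [this] at h6
  have hg1 : g 1 = 0 := by
    rw [hgdef]; simp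
  -- key: g q ≥ 0
  have key : 0 ≤ g q := by
    rcases le_or_gt q 1 with hq1 | hq1
    · -- g antitone on [q, Q], g q ≥ g 1 = 0
      have hanti : AntitoneOn g (Icc q Q) := by
        apply antitoneOn_of_deriv_nonpos (convex_Icc q Q)
        · intro x hx
          exact (hderiv x (lt_of_lt_of_le hq0 hx.1)).continuousAt.continuousWithinAt
        · intro x hx
          rw [interior_Icc] at hx
          exact (hderiv x (lt_trans hq0 hx.1)).differentiableAt.differentiableWithinAt
        · intro x hx
          rw [interior_Icc] at hx
          have hx0 : 0 < x := lt_trans hq0 hx.1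
          rw [(hderiv x hx0).deriv]
          apply div_nonpos_of_nonpos_of_nonneg
          · nlinarith [mul_pos (mul_pos hθ0 (sub_pos.2 hx.1)) (sub_pos.2 hx.2)]
          · positivity
      have := hanti ⟨le_refl q, hqltQ.le⟩ ⟨hq1, hQ1.le⟩ hq1
      rw [hg1] at this; linarith
    · -- g monotone on [1, q], g q ≥ g 1 = 0
      have hmono : MonotoneOn g (Icc 1 q) := by
        apply monotoneOn_of_deriv_nonneg (convex_Icc 1 q)
        · intro x hx
          exact (hderiv x (lt_of_lt_of_le one_pos hx.1)).continuousAt.continuousWithinAt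
        · intro x hx
          rw [interior_Icc] at hx
          exact (hderiv x (lt_trans one_pos hx.1)).differentiableAt.differentiableWithinAt
        · intro x hx
          rw [interior_Icc] at hx
          have hx0 : 0 < x := lt_trans one_pos hx.1
          rw [(hderiv x hx0).deriv]
          apply div_nonneg _ (by positivity)
          have hxQ : x < Q := lt_trans hx.2 hqltQ
          nlinarith [mul_pos (mul_pos hθ0 (sub_pos.2 hx.2)) (sub_pos.2 hxQ)]
      have := hmono ⟨le_refl 1, hq1.le⟩ ⟨hq1.le, le_refl q⟩ hq1.le
      rw [hg1] at this; linarith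
  -- conclude
  constructor
  · have hexp : q ^ 2 ≤ Real.exp (θ * (q + C - 1 - C / q)) := by
      have h1 : Real.log (q ^ 2) ≤ θ * (q + C - 1 - C / q) := by
        rw [Real.log_pow]
        rw [hgdef] at key
        simp only at key
        push_cast
        linarith
      calc q ^ 2 = Real.exp (Real.log (q ^ 2)) := (Real.exp_log (by positivity)).symm
        _ ≤ _ := Real.exp_le_exp.2 h1
    have hcoef : 0 < C / (r * q ^ 2) := by positivity
    calc C / (r * q ^ 2) * Real.exp (θ * (q + C - 1 - C / q))
        ≥ C / (r * q ^ 2) * q ^ 2 := by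
          exact mul_le_mul_of_nonneg_left hexp hcoef.le
      _ = C / r := by field_simp
  · rw [gt_iff_lt, lt_div_iff₀ hr0]
    nlinarith
end
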